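/- Rules (r8) and (r9) hold: #[∃x T(x)] ∈ G(U) iff U ≠ ∅ iff #T(⌜A⌝) ∈ G(U) for some sentence A; #[∃x T(x)] ∈ F(U) iff U = D; #[∀x T(x)] ∈ G(U) iff U = D; and #[∀x T(x)] ∈ F(U) iff there exists a sentence A with ¬A ∈ U. -/
import Mathlib


inductive Sent : Type
  | atom : ℕ → Sent
  | T : ℕ → Sent
  | exT : Sent
  | allT : Sent
  | exNT : Sent
  | allNT : Sent
  | neg : Sent → Sent
  | disj : Sent → Sent → Sent
  | conj : Sent → Sent → Sent
  | impl : Sent → Sent → Sent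
  | biimp : Sent → Sent → Sent

open Sent

/-- One step of the closure: `step S = S ∪ ⋃_{k=1}^9 S^k`, the nine rules of the paper. -/
def step (S : Set Sent) : Set Sent :=
  S ∪ {x | ∃ A B, x = disj A B ∧ (A ∈ S ∨ B ∈ S)}
    ∪ {x | ∃ A B, x = conj A B ∧ A ∈ S ∧ B ∈ S}
    ∪ {x | ∃ A B, x = impl A B ∧ (neg A ∈ S ∨ B ∈ S)}
    ∪ {x | ∃ A B, x = biimp A B ∧ ((A ∈ S ∧ B ∈ S) ∨ (neg A ∈ S ∧ neg B ∈ S))}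
    ∪ {x | ∃ A B, x = neg (disj A B) ∧ neg A ∈ S ∧ neg B ∈ S}
    ∪ {x | ∃ A B, x = neg (conj A B) ∧ (neg A ∈ S ∨ neg B ∈ S)}
    ∪ {x | ∃ A B, x = neg (impl A B) ∧ A ∈ S ∧ neg B ∈ S}
    ∪ {x | ∃ A B, x = neg (biimp A B) ∧ ((A ∈ S ∧ neg B ∈ S) ∨ (neg A ∈ S ∧ B ∈ S))}
    ∪ {x | ∃ A, x = neg (neg A) ∧ A ∈ S}

/-- The sequence `G_n(U)`, given the base set `G_0(U)`. -/
def Gseq (G0 : Set Sent) : ℕ → Set Sent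
  | 0 => G0
  | n + 1 => step (Gseq G0 n)

/-- `G(U) = ⋃_n G_n(U)`. -/
def Gset (G0 : Set Sent) : Set Sent := ⋃ n, Gseq G0 n

/-- `F(U) = {A : ¬A ∈ G(U)}`. -/
def Fset (G0 : Set Sent) : Set Sent := {A | neg A ∈ Gset G0}

/-- A set of sentences is consistent if it contains no sentence together with its negation. -/
def Consistent (S : Set Sent) : Prop := ¬ ∃ A, A ∈ S ∧ neg A ∈ S

/-- Inversion properties of the base set `G_0(U)` for compound sentences. -/
def BaseInversion (S : Set Sent) : Prop :=
  (∀ A B, disj A B ∈ S → A ∈ S ∨ B ∈ S) ∧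
  (∀ A B, conj A B ∈ S → A ∈ S ∧ B ∈ S) ∧
  (∀ A B, impl A B ∈ S → neg A ∈ S ∨ B ∈ S) ∧
  (∀ A B, biimp A B ∈ S → (A ∈ S ∧ B ∈ S) ∨ (neg A ∈ S ∧ neg B ∈ S)) ∧
  (∀ A B, neg (disj A B) ∈ S → neg A ∈ S ∧ neg B ∈ S) ∧
  (∀ A B, neg (conj A B) ∈ S → neg A ∈ S ∨ neg B ∈ S) ∧
  (∀ A B, neg (impl A B) ∈ S → A ∈ S ∧ neg B ∈ S) ∧
  (∀ A B, neg (biimp A B) ∈ S → (A ∈ S ∧ neg B ∈ S) ∨ (neg A ∈ S ∧ B ∈ S)) ∧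
  (∀ A, neg (neg A) ∈ S → A ∈ S)

/-- `D_1(U) = {#T(⌜A⌝) : #A ∈ U}`. -/
def D1 (enc : Sent → ℕ) (U : Set Sent) : Set Sent := {s | ∃ A ∈ U, s = T (enc A)}

/-- `D_2(U) = {#[¬T(⌜A⌝)] : #[¬A] ∈ U}`. -/
def D2 (enc : Sent → ℕ) (U : Set Sent) : Set Sent :=
  {s | ∃ A : Sent, neg A ∈ U ∧ s = neg (T (enc A))}

open Classical in
/-- The base set `G_0(U)` of the paper (formula (2)), defined by cases on `U`. -/
noncomputable def GZero (W : Set Sent) (enc : Sent → ℕ) (U : Set Sent) : Set Sent :=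
  if U = ∅ then W
  else if U = Set.univ then
    W ∪ D1 enc U ∪ D2 enc U ∪
      {exT, neg exT, allT, neg allT, allNT, neg allNT, exNT, neg exNT}
  else if D2 enc U = ∅ then
    W ∪ D1 enc U ∪ {exT, neg allNT}
  else
    W ∪ D1 enc U ∪ D2 enc U ∪ {exT, neg allNT, neg allT, exNT}

/-- Atomic-shaped sentences: not of any form that `step` can create. -/
def SAtomicShape : Sent → Prop := fun x =>
  match x with
  | .disj _ _ | .conj _ _ | .impl _ _ | .biimp _ _ => False
  | .neg (.disj _ _) | .neg (.conj _ _) | .neg (.impl _ _)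
  | .neg (.biimp _ _) | .neg (.neg _) => False
  | _ => True

lemma step_atomic {S : Set Sent} {x : Sent} (hx : SAtomicShape x) (h : x ∈ step S) : x ∈ S := by
  rcases h with (((((((((h | h) | h) | h) | h) | h) | h) | h) | h) | h)
  · exact h
  all_goals
    first
    | (obtain ⟨A, B, rfl, -⟩ := h; simp [SAtomicShape] at hx)
    | (obtain ⟨A, rfl, -⟩ := h; simp [SAtomicShape] at hx)

lemma Gseq_atomic {G0 : Set Sent} {x : Sent} (hx : SAtomicShape x) :
    ∀ n, x ∈ Gseq G0 n → x ∈ G0 := by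
  intro n
  induction n with
  | zero => exact id
  | succ n ih => intro h; exact ih (step_atomic hx h)

lemma Gset_atomic {G0 : Set Sent} {x : Sent} (hx : SAtomicShape x) :
    x ∈ Gset G0 ↔ x ∈ G0 := by
  constructor
  · intro h
    obtain ⟨_, ⟨n, rfl⟩, h⟩ := h
    exact Gseq_atomic hx n h
  · intro h; exact Set.mem_iUnion.2 ⟨0, h⟩

lemma D2_empty_iff (enc : Sent → ℕ) (U : Set Sent) :
    D2 enc U = ∅ ↔ ∀ A : Sent, neg A ∉ U := by
  constructor
  · intro h A hA
    have : neg (T (enc A)) ∈ D2 enc U := ⟨A, hA, rfl⟩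
    rw [h] at this; exact this.elim
  · intro h
    ext s; simp only [D2, Set.mem_setOf_eq, Set.mem_empty_iff_false, iff_false]
    rintro ⟨A, hA, -⟩; exact h A hA

theorem rules_r8_r9 (W : Set Sent) (enc : Sent → ℕ) (henc : Function.Injective enc)
    (hWq : ∀ s ∈ ({exT, neg exT, allT, neg allT, allNT, neg allNT, exNT, neg exNT} :
      Set Sent), s ∉ W)
    (hWT : ∀ n : ℕ, T n ∉ W ∧ neg (T n) ∉ W)
    (U : Set Sent) :
    (exT ∈ Gset (GZero W enc U) ↔ U ≠ ∅) ∧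
    (U ≠ ∅ ↔ ∃ A : Sent, T (enc A) ∈ Gset (GZero W enc U)) ∧
    (exT ∈ Fset (GZero W enc U) ↔ U = Set.univ) ∧
    (allT ∈ Gset (GZero W enc U) ↔ U = Set.univ) ∧
    (allT ∈ Fset (GZero W enc U) ↔ ∃ A : Sent, neg A ∈ U) := by
  classical
  have hexTW : exT ∉ W := hWq _ (by simp)
  have hnexTW : neg exT ∉ W := hWq _ (by simp)
  have hallTW : allT ∉ W := hWq _ (by simp)
  have hnallTW : neg allT ∉ W := hWq _ (by simp)
  have hexT_D1 : exT ∉ D1 enc U := by rintro ⟨A, -, h⟩; simp at h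
  have hexT_D2 : exT ∉ D2 enc U := by rintro ⟨A, -, h⟩; simp at h
  have hnexT_D1 : neg exT ∉ D1 enc U := by rintro ⟨A, -, h⟩; simp at h
  have hnexT_D2 : neg exT ∉ D2 enc U := by rintro ⟨A, -, h⟩; simp at h
  have hallT_D1 : allT ∉ D1 enc U := by rintro ⟨A, -, h⟩; simp at h
  have hallT_D2 : allT ∉ D2 enc U := by rintro ⟨A, -, h⟩; simp at h
  have hnallT_D1 : neg allT ∉ D1 enc U := by rintro ⟨A, -, h⟩; simp at h
  have hnallT_D2 : neg allT ∉ D2 enc U := by rintro ⟨A, -, h⟩; simp at h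
  have key : ∀ x : Sent, SAtomicShape x →
      (x ∈ Gset (GZero W enc U) ↔ x ∈ GZero W enc U) := fun _ hx => Gset_atomic hx
  have keyT : (∃ A : Sent, T (enc A) ∈ Gset (GZero W enc U)) ↔
      ∃ A : Sent, T (enc A) ∈ GZero W enc U :=
    exists_congr fun A => key _ trivial
  simp only [Fset, Set.mem_setOf_eq]
  rw [key exT trivial, key (neg exT) trivial, key allT trivial, key (neg allT) trivial, keyT]
  unfold GZero
  split_ifs with h0 h1 h2
  · refine ⟨?_, ?_, ?_, ?_, ?_⟩
    · simp [h0, hexTW]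
    · simp only [h0]
      constructor
      · intro h; exact absurd rfl h
      · rintro ⟨A, hA⟩; exact absurd hA (hWT (enc A)).1
    · simp only [h0]
      constructor
      · intro h; exact absurd h hnexTW
      · intro h
        have : exT ∈ (∅ : Set Sent) := h.symm ▸ Set.mem_univ exT
        exact this.elim
    · constructor
      · intro h; exact absurd h hallTW
      · intro h
        rw [h0] at h
        have : exT ∈ (∅ : Set Sent) := h.symm ▸ Set.mem_univ exT
        exact this.elim
    · simp [h0, hnallTW]
  · have hUne : ∀ A : Sent, A ∈ U := fun A => h1 ▸ Set.mem_univ A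
    refine ⟨?_, ?_, ?_, ?_, ?_⟩
    · simp only [Set.mem_union]
      constructor
      · intro _; exact h0
      · intro _; right; simp
    · constructor
      · intro _
        exact ⟨atom 0, Or.inl (Or.inl (Or.inr ⟨atom 0, hUne _, rfl⟩))⟩
      · intro _; exact h0
    · constructor
      · intro _; exact h1
      · intro _; right; simp
    · constructor
      · intro _; exact h1
      · intro _; right; simp
    · constructor
      · intro _; exact ⟨atom 0, hUne _⟩
      · intro _; right; simp
  · have hD2 := (D2_empty_iff enc U).1 h2
    refine ⟨?_, ?_, ?_, ?_, ?_⟩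
    · simp only [Set.mem_union]
      constructor
      · intro _; exact h0
      · intro _; right; simp
    · constructor
      · intro _
        obtain ⟨B, hB⟩ := Set.nonempty_iff_ne_empty.2 h0
        exact ⟨B, Or.inl (Or.inr ⟨B, hB, rfl⟩)⟩
      · intro _; exact h0
    · constructor
      · rintro ((h | h) | h)
        · exact absurd h hnexTW
        · exact absurd h hnexT_D1
        · simp at h
      · intro h; exact absurd h h1
    · constructor
      · rintro ((h | h) | h)
        · exact absurd h hallTW
        · exact absurd h hallT_D1
        · simp at h
      · intro h; exact absurd h h1
    · constructor
      · rintro ((h | h) | h)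
        · exact absurd h hnallTW
        · exact absurd h hnallT_D1
        · simp at h
      · rintro ⟨A, hA⟩; exact absurd hA (hD2 A)
  · have hD2 : ∃ A : Sent, neg A ∈ U := by
      by_contra h
      push_neg at h
      exact h2 ((D2_empty_iff enc U).2 h)
    refine ⟨?_, ?_, ?_, ?_, ?_⟩
    · simp only [Set.mem_union]
      constructor
      · intro _; exact h0
      · intro _; right; simp
    · constructor
      · intro _
        obtain ⟨B, hB⟩ := Set.nonempty_iff_ne_empty.2 h0
        exact ⟨B, Or.inl (Or.inl (Or.inr ⟨B, hB, rfl⟩))⟩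
      · intro _; exact h0
    · constructor
      · rintro (((h | h) | h) | h)
        · exact absurd h hnexTW
        · exact absurd h hnexT_D1
        · exact absurd h hnexT_D2
        · simp at h
      · intro h; exact absurd h h1
    · constructor
      · rintro (((h | h) | h) | h)
        · exact absurd h hallTW
        · exact absurd h hallT_D1
        · exact absurd h hallT_D2
        · simp at h
      · intro h; exact absurd h h1
    · constructor
      · intro _; exact hD2
      · intro _; right; simp
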